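/- For every odd prime p, the sum over n from 0 to (p-1)/2 of ((1/2)_n)^2 / ((1)_n^2 (n+1)), viewed as an element of the p-adic integers, is congruent to 2p^2 modulo p^3. (Van Hamme (I.2)) -/

import Mathlib

/-!
Since `(1/2)_n / n! = C(2n,n) / 4^n`, the recurrence `(n+1) C(2n+2,n+1) = 2(2n+1) C(2n,n)` makes
the partial sums telescope to `(N+1) C(2N+2,N+1)^2 / 4^(2N+1)`. For `p = 2k+1` the same recurrence
at `n = k` gives `C(2k+2,k+1) = p m` with `(k+1) m = 2 C(2k,k) = 2 C(p-1,k) ≡ 2(-1)^k (mod p)`.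
So the sum equals `2p^2 + p^2 D / 4^p` with `D = (k+1) m^2 - 2·4^p`, and `D ≡ 0 (mod p)` because
`2(k+1) ≡ 1` and `4^p ≡ 4`.
-/

open Polynomial Finset

/-- Rising Pochhammer symbol over ℚ. -/
noncomputable def poch (x : ℚ) (n : ℕ) : ℚ := (ascPochhammer ℚ n).eval x

open Nat

lemma poch_succ (x : ℚ) (n : ℕ) : poch x (n + 1) = poch x n * (x + n) := by
  simp [poch, ascPochhammer_succ_eval]

lemma poch_one (n : ℕ) : poch 1 n = n ! := by
  simp [poch]

lemma poch_half (n : ℕ) : poch (1 / 2) n = n ! * centralBinom n / 4 ^ n := by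
  induction n with
  | zero => simp [poch]
  | succ n ih =>
    have h : (n + 1 : ℚ) * centralBinom (n + 1) = 2 * (2 * n + 1) * centralBinom n := by
      exact_mod_cast succ_mul_centralBinom_succ n
    rw [poch_succ, ih, factorial_succ, pow_succ]
    push_cast
    field_simp
    linear_combination (-2) * h

lemma sum_range_centralBinom_div_four_pow_sq (N : ℕ) :
    ∑ n ∈ range (N + 1), ((centralBinom n : ℚ) / 4 ^ n) ^ 2 / (n + 1)
      = (N + 1 : ℚ) * centralBinom (N + 1) ^ 2 / 4 ^ (2 * N + 1) := by
  induction N with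
  | zero => norm_num [centralBinom]
  | succ N ih =>
    have h : (N + 2 : ℚ) * centralBinom (N + 2) = 2 * (2 * N + 3) * centralBinom (N + 1) := by
      exact_mod_cast succ_mul_centralBinom_succ (N + 1)
    have hN : (N + 2 : ℚ) ≠ 0 := by positivity
    rw [sum_range_succ, ih]
    apply mul_left_cancel₀ hN
    rw [show (4 : ℚ) ^ (2 * (N + 1) + 1) = 64 * (4 ^ N) ^ 2 by ring,
      show (4 : ℚ) ^ (2 * N + 1) = 4 * (4 ^ N) ^ 2 by ring, pow_succ 4 N]
    push_cast
    field_simp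
    linear_combination
      (-16 * ((N + 2 : ℚ) * centralBinom (N + 2) + 2 * (2 * N + 3) * centralBinom (N + 1))) * h

lemma sum_range_poch_half_sq (N : ℕ) :
    ∑ n ∈ range (N + 1), (poch (1 / 2) n) ^ 2 / ((poch 1 n) ^ 2 * (n + 1))
      = (N + 1 : ℚ) * centralBinom (N + 1) ^ 2 / 4 ^ (2 * N + 1) := by
  rw [← sum_range_centralBinom_div_four_pow_sq]
  refine sum_congr rfl fun n _ ↦ ?_
  rw [poch_half, poch_one]
  field_simp

lemma natCast_choose_pred_eq_neg_one_pow {p : ℕ} [hp : Fact p.Prime] {j : ℕ} (hj : j ≤ p - 1) :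
    ((p - 1).choose j : ZMod p) = (-1) ^ j := by
  induction j with
  | zero => simp
  | succ j ih =>
    have hpj : (p.choose (j + 1) : ZMod p) = 0 :=
      (ZMod.natCast_eq_zero_iff _ _).mpr (hp.out.dvd_choose_self j.succ_ne_zero (by omega))
    have pascal : p.choose (j + 1) = (p - 1).choose j + (p - 1).choose (j + 1) := by
      rw [← choose_succ_succ', Nat.sub_one_add_one hp.out.ne_zero]
    rw [pascal, cast_add, ih (by omega)] at hpj
    linear_combination hpj

lemma exists_centralBinom_succ_eq_mul {p k : ℕ} (hp : p.Prime) (hk : p = 2 * k + 1) :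
    ∃ m, centralBinom (k + 1) = p * m ∧ (k + 1) * m = 2 * centralBinom k := by
  have h := succ_mul_centralBinom_succ k
  rw [← hk] at h
  have hcop : p.Coprime (k + 1) :=
    coprime_of_lt_prime k.succ_ne_zero (by have := hp.two_le; omega) hp
  obtain ⟨m, hm⟩ := hcop.dvd_of_dvd_mul_left ⟨2 * centralBinom k, by rw [h]; ring⟩
  refine ⟨m, hm, Nat.eq_of_mul_eq_mul_left hp.pos ?_⟩
  calc p * ((k + 1) * m) = (k + 1) * centralBinom (k + 1) := by rw [hm]; ring
    _ = p * (2 * centralBinom k) := by rw [h]; ring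

lemma prime_dvd_succ_mul_sq_sub {p k m : ℕ} [Fact p.Prime] (hk : p = 2 * k + 1)
    (hm : (k + 1) * m = 2 * centralBinom k) :
    (p : ℤ) ∣ (k + 1) * m ^ 2 - 2 * 4 ^ p := by
  rw [← ZMod.intCast_zmod_eq_zero_iff_dvd]
  have two_mul_succ : 2 * ((k : ZMod p) + 1) = 1 := by
    have := congrArg (fun n : ℕ ↦ (n : ZMod p)) (show 2 * (k + 1) = p + 1 by omega)
    simpa using this
  have hm_mod : ((k : ZMod p) + 1) * m = 2 * (-1) ^ k := by
    have := congrArg (fun n : ℕ ↦ (n : ZMod p)) hm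
    rw [centralBinom_eq_two_mul_choose, show 2 * k = p - 1 by omega] at this
    push_cast at this
    rwa [natCast_choose_pred_eq_neg_one_pow (p := p) (by omega)] at this
  have sign : ((-1 : ZMod p) ^ k) ^ 2 = 1 := by
    rw [← pow_mul, pow_mul', neg_one_sq, one_pow]
  push_cast
  rw [ZMod.pow_card]
  linear_combination (-((k : ZMod p) + 1) * m ^ 2) * two_mul_succ
    + 2 * (((k : ZMod p) + 1) * m + 2 * (-1) ^ k) * hm_mod + 8 * sign

lemma Padic.norm_four_pow {p : ℕ} [hp : Fact p.Prime] (hp2 : p ≠ 2) (n : ℕ) :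
    ‖(4 : ℚ_[p]) ^ n‖ = 1 := by
  have h : ‖((2 ^ 2 : ℕ) : ℚ_[p])‖ = 1 :=
    Padic.norm_natCast_eq_one_iff.mpr (((coprime_primes hp.out prime_two).mpr hp2).pow_right 2)
  rw [norm_pow, show (4 : ℚ_[p]) = ((2 ^ 2 : ℕ) : ℚ_[p]) by norm_num, h, one_pow]

/-- Van Hamme (I.2): for every odd prime `p`,
`∑_{n=0}^{(p-1)/2} ((1/2)_n)^2 / ((1)_n^2 (n+1)) ≡ 2p^2 (mod p^3)` in `ℤ_p`. -/
theorem vanHamme_I2 (p : ℕ) [Fact p.Prime] (hp : p ≠ 2) :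
    ‖((∑ n ∈ Finset.range ((p-1)/2 + 1),
        (poch (1/2) n)^2 / ((poch 1 n)^2 * (n + 1)) : ℚ) : ℚ_[p])
      - 2 * (p : ℚ_[p])^2‖ ≤ (p : ℝ) ^ (-3 : ℤ) := by
  have hprime : p.Prime := Fact.out
  obtain ⟨k, hk⟩ := hprime.odd_of_ne_two hp
  obtain ⟨m, hC, hm⟩ := exists_centralBinom_succ_eq_mul hprime hk
  set D : ℤ := (k + 1) * m ^ 2 - 2 * 4 ^ p with hD
  have hsum : ∑ n ∈ Finset.range ((p-1)/2 + 1),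
      (poch (1/2) n)^2 / ((poch 1 n)^2 * (n + 1)) = (2 * p ^ 2 + p ^ 2 * D / 4 ^ p : ℚ) := by
    rw [show (p - 1) / 2 = k by omega, sum_range_poch_half_sq, hC, ← hk, hD]
    push_cast
    field_simp
    ring
  have hDnorm : ‖(D : ℚ_[p])‖ ≤ (p : ℝ) ^ (-1 : ℤ) := by
    simpa using (Padic.norm_int_le_pow_iff_dvd D 1).mpr
      (by simpa using prime_dvd_succ_mul_sq_sub hk hm)
  rw [hsum]
  push_cast
  rw [add_sub_cancel_left, norm_div, Padic.norm_four_pow hp, div_one, norm_mul, Padic.norm_p_pow,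
    show (-3 : ℤ) = -(2 : ℕ) + -1 by norm_num, zpow_add₀ (by exact_mod_cast hprime.ne_zero)]
  gcongr
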